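/- The Rademacher function 𝔯 on PSL(2,ℤ) = ⟨a, b | a² = b³ = 1⟩, defined on the normal form of g as the number of occurrences of b minus the number of occurrences of b⁻¹, satisfies 𝔯(gh) − 𝔯(g) − 𝔯(h) ∈ {−3, 0, 3} for all g, h; in particular 𝔯 is a quasimorphism of defect 3. -/

import Mathlib

/-- The alphabet for normal forms in `PSL(2,ℤ) = ⟨a, b | a² = b³ = 1⟩`:
`a`, `b` and `B = b⁻¹`. -/
inductive Rad
  | a | b | B
deriving DecidableEq

/-- The relators `a²` and `b³` defining `PSL(2,ℤ)` as a presented group. -/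
def psl2zRels : Set (FreeGroup (Fin 2)) :=
  {(FreeGroup.of 0) ^ 2, (FreeGroup.of 1) ^ 3}

/-- `PSL(2,ℤ)` as the presented group `⟨a, b | a² = b³ = 1⟩ = ℤ/2 * ℤ/3`. -/
abbrev PSL2Z := PresentedGroup psl2zRels

/-- Interpretation of each normal-form letter in `PSL(2,ℤ)`. -/
def radToPSL : Rad → PSL2Z
  | .a => PresentedGroup.of 0
  | .b => PresentedGroup.of 1
  | .B => (PresentedGroup.of 1)⁻¹

/-- Evaluation of a word in the letters `a, b, b⁻¹` in `PSL(2,ℤ)`. -/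
def evalRad (w : List Rad) : PSL2Z := (w.map radToPSL).prod

/-- Adjacent letters in a reduced normal form: exactly one of them is `a`
(so the word alternates between `a` and `b^{±1}`, with no proper powers). -/
def radOk (x y : Rad) : Prop := (x = Rad.a) ↔ ¬(y = Rad.a)

/-- A word is reduced (a normal form) when consecutive letters alternate. -/
def RadReduced (w : List Rad) : Prop := List.Chain' radOk w

/-- The Rademacher function of a normal form: the number of occurrences of `b`
minus the number of occurrences of `b⁻¹`. -/
def radem (w : List Rad) : ℤ := (w.count Rad.b : ℤ) - (w.count Rad.B : ℤ)

namespace RadAux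

instance : DecidablePred (fun p : Rad × Rad => radOk p.1 p.2) := fun p => by
  unfold radOk; infer_instance

instance (x y : Rad) : Decidable (radOk x y) := by unfold radOk; infer_instance

/-- reduced left-multiplication by one letter -/
def cons' : Rad → List Rad → List Rad
  | .a, .a :: t => t
  | .b, .B :: t => t
  | .B, .b :: t => t
  | .b, .b :: t => .B :: t
  | .B, .B :: t => .b :: t
  | x, w => x :: w

lemma cons'_nil (x : Rad) : cons' x [] = [x] := by cases x <;> rfl

lemma cons'_ok {x y : Rad} (h : radOk x y) (t : List Rad) :
    cons' x (y :: t) = x :: y :: t := by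
  cases x <;> cases y <;> first | rfl | exact absurd h (by decide)

lemma okBb {z : Rad} (h : radOk Rad.b z) : radOk Rad.B z := by
  cases z <;> first | exact (by decide) | exact absurd h (by decide)

lemma okbB {z : Rad} (h : radOk Rad.B z) : radOk Rad.b z := by
  cases z <;> first | exact (by decide) | exact absurd h (by decide)

lemma ok_left_Bb {z : Rad} (h : radOk z Rad.b) : radOk z Rad.B := by
  cases z <;> first | exact (by decide) | exact absurd h (by decide)

lemma ok_left_bB {z : Rad} (h : radOk z Rad.B) : radOk z Rad.b := by
  cases z <;> first | exact (by decide) | exact absurd h (by decide)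

lemma eq_a_of_ok_b {z : Rad} (h : radOk Rad.b z) : z = Rad.a := by
  cases z <;> first | rfl | exact absurd h (by decide)

lemma eq_a_of_ok_B {z : Rad} (h : radOk Rad.B z) : z = Rad.a := by
  cases z <;> first | rfl | exact absurd h (by decide)

lemma reduced_cons' (x : Rad) {w : List Rad} (h : RadReduced w) :
    RadReduced (cons' x w) := by
  rcases w with _ | ⟨y, t⟩
  · rw [cons'_nil]; exact List.isChain_singleton x
  · have h1 : ∀ z ∈ t.head?, radOk y z := (List.isChain_cons.1 h).1
    have h2 : RadReduced t := (List.isChain_cons.1 h).2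
    cases x <;> cases y <;> simp only [cons'] <;>
      first
        | exact h2
        | exact List.isChain_cons.2 ⟨fun z hz => okBb (h1 z hz), h2⟩
        | exact List.isChain_cons.2 ⟨fun z hz => okbB (h1 z hz), h2⟩
        | exact List.isChain_cons_cons.2 ⟨by decide, h⟩

lemma cons'_aa {w : List Rad} (h : RadReduced w) :
    cons' Rad.a (cons' Rad.a w) = w := by
  rcases w with _ | ⟨y, t⟩
  · rfl
  · cases y
    · -- w = a :: t ; cons' a w = t; need cons' a t = a :: t
      rcases t with _ | ⟨z, t'⟩
      · rfl
      · have : z = Rad.a → False := by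
          have := (List.isChain_cons_cons.1 h).1
          intro hz; subst hz; exact absurd this (by decide)
        cases z
        · exact absurd rfl this
        · rfl
        · rfl
    · rfl
    · rfl

lemma cons'_Bb {w : List Rad} (h : RadReduced w) :
    cons' Rad.B (cons' Rad.b w) = w := by
  rcases w with _ | ⟨y, t⟩
  · rfl
  · cases y
    · rfl
    · rfl
    · -- w = B :: t; cons' b w = t; need cons' B t = B :: t
      rcases t with _ | ⟨z, t'⟩
      · rfl
      · have hz : z = Rad.a := eq_a_of_ok_B (List.isChain_cons_cons.1 h).1
        subst hz; rfl

lemma cons'_bB {w : List Rad} (h : RadReduced w) :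
    cons' Rad.b (cons' Rad.B w) = w := by
  rcases w with _ | ⟨y, t⟩
  · rfl
  · cases y
    · rfl
    · rcases t with _ | ⟨z, t'⟩
      · rfl
      · have hz : z = Rad.a := eq_a_of_ok_b (List.isChain_cons_cons.1 h).1
        subst hz; rfl
    · rfl

lemma cons'_bbb {w : List Rad} (h : RadReduced w) :
    cons' Rad.b (cons' Rad.b (cons' Rad.b w)) = w := by
  rcases w with _ | ⟨y, t⟩
  · rfl
  · cases y
    · rfl
    · rcases t with _ | ⟨z, t'⟩
      · rfl
      · have hz : z = Rad.a := eq_a_of_ok_b (List.isChain_cons_cons.1 h).1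
        subst hz; rfl
    · rcases t with _ | ⟨z, t'⟩
      · rfl
      · have hz : z = Rad.a := eq_a_of_ok_B (List.isChain_cons_cons.1 h).1
        subst hz; rfl

lemma foldr_red : ∀ {u v : List Rad}, RadReduced (u ++ v) →
    List.foldr cons' v u = u ++ v := by
  intro u
  induction u with
  | nil => intro v _; rfl
  | cons x u ih =>
    intro v h
    have h0 : RadReduced (x :: (u ++ v)) := h
    have h' : RadReduced (u ++ v) := h0.tail
    rw [List.foldr_cons, ih h']
    rcases hl : u ++ v with _ | ⟨y, t⟩
    · rw [cons'_nil, List.cons_append, hl]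
    · rw [hl] at h0
      rw [List.cons_append, hl]
      exact cons'_ok (List.isChain_cons_cons.1 h0).1 t

def RW := {w : List Rad // RadReduced w}

def consW (x : Rad) : RW → RW := fun w => ⟨cons' x w.1, reduced_cons' x w.2⟩

def permA : Equiv.Perm RW :=
  ⟨consW Rad.a, consW Rad.a,
    fun w => Subtype.ext (cons'_aa w.2), fun w => Subtype.ext (cons'_aa w.2)⟩

def permB : Equiv.Perm RW :=
  ⟨consW Rad.b, consW Rad.B,
    fun w => Subtype.ext (cons'_Bb w.2), fun w => Subtype.ext (cons'_bB w.2)⟩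

def fgen : Fin 2 → Equiv.Perm RW := ![permA, permB]

lemma hrels : ∀ r ∈ psl2zRels, FreeGroup.lift fgen r = 1 := by
  intro r hr
  rcases hr with h | h
  · subst h
    rw [map_pow, FreeGroup.lift_apply_of]
    ext w
    show fgen 0 (fgen 0 ((1 : Equiv.Perm RW) w)) = w
    exact Subtype.ext (cons'_aa w.2)
  · rw [Set.mem_singleton_iff] at h
    subst h
    rw [map_pow, FreeGroup.lift_apply_of]
    ext w
    show fgen 1 (fgen 1 (fgen 1 ((1 : Equiv.Perm RW) w))) = w
    exact Subtype.ext (cons'_bbb w.2)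

def radPhi : PSL2Z →* Equiv.Perm RW := PresentedGroup.toGroup hrels

lemma phi_act (x : Rad) (w : RW) : (radPhi (radToPSL x) w).1 = cons' x w.1 := by
  cases x
  · show (radPhi (PresentedGroup.of 0) w).1 = _
    rw [radPhi, PresentedGroup.toGroup.of]
    rfl
  · show (radPhi (PresentedGroup.of 1) w).1 = _
    rw [radPhi, PresentedGroup.toGroup.of]
    rfl
  · show (radPhi (PresentedGroup.of 1)⁻¹ w).1 = _
    rw [map_inv, radPhi, PresentedGroup.toGroup.of]
    rfl

lemma phi_fold : ∀ (w : List Rad) (v : RW),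
    (radPhi (evalRad w) v).1 = List.foldr cons' v.1 w := by
  intro w
  induction w with
  | nil =>
    intro v
    show (radPhi (evalRad []) v).1 = v.1
    have : evalRad [] = 1 := rfl
    rw [this, map_one]
    rfl
  | cons x w ih =>
    intro v
    have h1 : evalRad (x :: w) = radToPSL x * evalRad w := by
      simp [evalRad]
    rw [h1, map_mul, Equiv.Perm.mul_apply, phi_act, ih, List.foldr_cons]

def rv : Rad → ℤ
  | .a => 0 | .b => 1 | .B => -1

lemma radem_append (u v : List Rad) : radem (u ++ v) = radem u + radem v := by
  simp [radem, List.count_append]; ring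

lemma radem_cons (x : Rad) (w : List Rad) : radem (x :: w) = rv x + radem w := by
  cases x <;> simp [radem, rv, List.count_cons] <;> ring

lemma mem3 {n : ℤ} (h : n = -3 ∨ n = 0 ∨ n = 3) : n ∈ ({-3, 0, 3} : Set ℤ) := by
  rcases h with h | h | h <;> subst h <;> simp

lemma case_ok {p q : List Rad} {x y : Rad} (hg : RadReduced (p ++ [x]))
    (hh : RadReduced (y :: q)) (hxy : radOk x y) :
    radem (List.foldr cons' (cons' x (y :: q)) p) - radem (p ++ [x]) - radem (y :: q)
      ∈ ({-3, 0, 3} : Set ℤ) := by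
  rw [cons'_ok hxy]
  have hred : RadReduced ((p ++ [x]) ++ (y :: q)) := by
    refine List.IsChain.append hg hh ?_
    intro z hz w hw
    simp [List.getLast?_concat] at hz
    simp at hw
    subst hz; subst hw; exact hxy
  have e : p ++ x :: y :: q = (p ++ [x]) ++ (y :: q) := by simp
  rw [foldr_red (show RadReduced (p ++ (x :: y :: q)) by rw [e]; exact hred), e,
    radem_append]
  apply mem3
  right; left; ring

lemma case_cancel {p q : List Rad} {x y : Rad} (hc : cons' x (y :: q) = q)
    (hv : rv x + rv y = 0)
    (ihv : radem (List.foldr cons' q p) - radem p - radem q ∈ ({-3, 0, 3} : Set ℤ)) :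
    radem (List.foldr cons' (cons' x (y :: q)) p) - radem (p ++ [x]) - radem (y :: q)
      ∈ ({-3, 0, 3} : Set ℤ) := by
  rw [hc, radem_append, radem_cons, radem_cons]
  have e : radem (List.foldr cons' q p) - (radem p + (rv x + radem [])) - (rv y + radem q)
      = radem (List.foldr cons' q p) - radem p - radem q := by
    have : radem ([] : List Rad) = 0 := rfl
    rw [this]; linarith
  rw [e]; exact ihv

lemma case_merge {p q : List Rad} {x m : Rad}
    (hg : RadReduced (p ++ [x])) (hh : RadReduced (x :: q))
    (hc : cons' x (x :: q) = m :: q)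
    (hokm : ∀ z : Rad, radOk x z → radOk m z)
    (hokm' : ∀ z : Rad, radOk z x → radOk z m)
    (hv : rv m - 2 * rv x = -3 ∨ rv m - 2 * rv x = 3) :
    radem (List.foldr cons' (cons' x (x :: q)) p) - radem (p ++ [x]) - radem (x :: q)
      ∈ ({-3, 0, 3} : Set ℤ) := by
  have hp : RadReduced p := hg.prefix ⟨[x], rfl⟩
  have hq : RadReduced q := hh.tail
  have hyq : ∀ z ∈ q.head?, radOk x z := (List.isChain_cons.1 hh).1
  have hjp : ∀ z ∈ p.getLast?, radOk z x := by
    intro z hz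
    exact (List.isChain_append.1 hg).2.2 z hz x (by simp)
  have hred : RadReduced (p ++ (m :: q)) := by
    refine List.IsChain.append hp
      (List.isChain_cons.2 ⟨fun z hz => hokm z (hyq z hz), hq⟩) ?_
    intro z hz w hw
    simp at hw
    subst hw
    exact hokm' z (hjp z hz)
  rw [hc, foldr_red hred]
  simp only [radem_append, radem_cons, show radem ([] : List Rad) = 0 from rfl]
  apply mem3
  rcases hv with h | h
  · left; linarith
  · right; right; linarith

lemma key : ∀ (wg : List Rad), RadReduced wg → ∀ (wh : List Rad), RadReduced wh →
    radem (List.foldr cons' wh wg) - radem wg - radem wh ∈ ({-3, 0, 3} : Set ℤ) := by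
  intro wg
  induction wg using List.reverseRecOn with
  | nil =>
    intro _ wh _
    apply mem3
    right; left
    show radem wh - radem [] - radem wh = 0
    have : radem ([] : List Rad) = 0 := rfl
    rw [this]; ring
  | append_singleton p x ih =>
    intro hg wh hh
    have hp : RadReduced p := hg.prefix ⟨[x], rfl⟩
    rw [List.foldr_append]
    show radem (List.foldr cons' (cons' x wh) p) - _ - _ ∈ _
    rcases wh with _ | ⟨y, q⟩
    · rw [cons'_nil, foldr_red hg]
      apply mem3
      right; left
      have : radem ([] : List Rad) = 0 := rfl
      rw [this]; ring
    · have hq : RadReduced q := hh.tail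
      cases x
      · cases y
        · exact case_cancel rfl (by decide) (ih hp q hq)
        · exact case_ok hg hh (by decide)
        · exact case_ok hg hh (by decide)
      · cases y
        · exact case_ok hg hh (by decide)
        · exact case_merge hg hh rfl (fun z => okBb) (fun z => ok_left_Bb) (by decide)
        · exact case_cancel rfl (by decide) (ih hp q hq)
      · cases y
        · exact case_ok hg hh (by decide)
        · exact case_cancel rfl (by decide) (ih hp q hq)
        · exact case_merge hg hh rfl (fun z => okbB) (fun z => ok_left_bB) (by decide)

end RadAux

/-- The Rademacher function `𝔯` on `PSL(2,ℤ)`, computed on reduced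
normal forms, satisfies `𝔯(gh) − 𝔯(g) − 𝔯(h) ∈ {−3, 0, 3}`; in particular `𝔯` is a
quasimorphism of defect `3`. -/
theorem rademacher_quasimorphism (wg wh wgh : List Rad)
    (hg : RadReduced wg) (hh : RadReduced wh) (hgh : RadReduced wgh)
    (hmul : evalRad wgh = evalRad wg * evalRad wh) :
    radem wgh - radem wg - radem wh ∈ ({-3, 0, 3} : Set ℤ) := by
  have hnil : RadReduced ([] : List Rad) := List.isChain_nil
  have h1 : (RadAux.radPhi (evalRad wgh) ⟨[], hnil⟩).1 = wgh := by
    erw [RadAux.phi_fold]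
    have h2 : RadReduced (wgh ++ []) := by rwa [List.append_nil]
    rw [RadAux.foldr_red h2, List.append_nil]
  have hw : RadAux.radPhi (evalRad wh) ⟨[], hnil⟩ = ⟨wh, hh⟩ := by
    apply Subtype.ext
    erw [RadAux.phi_fold]
    have h2 : RadReduced (wh ++ []) := by rwa [List.append_nil]
    rw [RadAux.foldr_red h2, List.append_nil]
  erw [hmul, map_mul, Equiv.Perm.mul_apply, hw, RadAux.phi_fold] at h1
  rw [← h1]
  exact RadAux.key wg hg wh hh
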